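/- arXiv:2201.00065 — 3 statements merged into one kernel-verified Lean document; each statement's English description precedes it below -/
import Mathlib

section
/- Let Σ ∈ ℝ^{m×m} be symmetric positive semidefinite with Σ·e_j = 0 for some index j, and let v > 0. Then J(Σ + v·e_j e_jᵀ) − J(Σ) = (1−λ)·log(1 + α_j v) − log(1 + v/σ²) + λ·β_j·v, where α_j = e_jᵀ(Σ_YY + Σ)⁻¹e_j and β_j = e_jᵀ Σ_YY⁻¹ e_j. (Rank-one cost-difference formula, eq. (32), used in the proof of Theorem 1.) -/
/-!
Adding `v e_j e_jᵀ` is a rank-one update, so by the matrix determinant lemma each log-determinant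
in `J` grows by `log (1 + A⁻¹ j j * v)` for its positive definite matrix `A`. Since `Σ e_j = 0`,
`e_j` is an eigenvector of `σ² I + Σ` with eigenvalue `σ²`, whence `(σ² I + Σ)⁻¹ j j = σ⁻²`;
the trace term is linear in `S`.
-/

open Matrix Real

/-- The attack cost `J(S) = (1-λ)·log det(Σ_YY + S) − log det(σ²·I_m + S) + λ·tr(Σ_YY⁻¹ S)`. -/
noncomputable def attackCost (m : ℕ) (σ lam : ℝ)
    (Syy : Matrix (Fin m) (Fin m) ℝ) (S : Matrix (Fin m) (Fin m) ℝ) : ℝ :=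
  (1 - lam) * Real.log (Syy + S).det
    - Real.log (σ ^ 2 • (1 : Matrix (Fin m) (Fin m) ℝ) + S).det
    + lam * (Syy⁻¹ * S).trace

namespace Matrix

variable {n : Type*} [Fintype n] [DecidableEq n]

theorem single_one_dotProduct_mulVec_single_one {R : Type*} [NonAssocSemiring R]
    (M : Matrix n n R) (i j : n) :
    Pi.single i 1 ⬝ᵥ M *ᵥ Pi.single j 1 = M i j := by
  rw [mulVec_single_one, single_one_dotProduct, col_apply]

theorem det_add_single_same {R : Type*} [CommRing R] {A : Matrix n n R} (hA : IsUnit A.det)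
    (j : n) (c : R) :
    (A + single j j c).det = A.det * (1 + A⁻¹ j j * c) := by
  have hrank : single j j c =
      replicateCol Unit (Pi.single j c) * replicateRow Unit (Pi.single j (1 : R)) := by
    ext i k
    by_cases hi : i = j <;> by_cases hk : k = j <;> simp_all [single_apply, mul_apply, eq_comm]
  rw [hrank, det_add_replicateCol_mul_replicateRow hA]
  congr 1
  simp [det_unique, mul_apply, Pi.single_apply]

theorem inv_apply_self_of_mulVec_single_one {K : Type*} [Field K] {A : Matrix n n K}
    (hA : IsUnit A.det) {j : n} {c : K} (h : A *ᵥ Pi.single j 1 = c • Pi.single j 1) :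
    A⁻¹ j j = c⁻¹ := by
  have hcol : c • A⁻¹ *ᵥ Pi.single j 1 = Pi.single j 1 := by
    rw [← mulVec_smul, ← h, mulVec_mulVec, nonsing_inv_mul _ hA, one_mulVec]
  have hjj := congrFun hcol j
  rw [Pi.smul_apply, mulVec_single_one, col_apply, Pi.single_eq_same, smul_eq_mul] at hjj
  exact eq_inv_of_mul_eq_one_right hjj

theorem PosDef.log_det_add_single_same {A : Matrix n n ℝ} (hA : A.PosDef) (j : n) {c : ℝ}
    (hc : 0 ≤ c) :
    log (A + single j j c).det = log A.det + log (1 + A⁻¹ j j * c) := by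
  have hfactor : 0 < 1 + A⁻¹ j j * c := by nlinarith [hA.inv.diag_pos (i := j)]
  rw [det_add_single_same hA.det_pos.ne'.isUnit, log_mul hA.det_pos.ne' hfactor.ne']

end Matrix

theorem rank_one_cost_difference_general
    (m : ℕ) (σ lam : ℝ) (hσ : 0 < σ)
    (Syy : Matrix (Fin m) (Fin m) ℝ) (hYY : Syy.PosDef)
    (S : Matrix (Fin m) (Fin m) ℝ) (hS : S.PosSemidef)
    (j : Fin m) (hSj : S.mulVec (Pi.single j 1) = 0)
    (v : ℝ) (hv : 0 < v) :
    attackCost m σ lam Syy (S + v • Matrix.single j j 1)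
      - attackCost m σ lam Syy S =
    (1 - lam) * Real.log (1 + (Pi.single j 1 ⬝ᵥ ((Syy + S)⁻¹).mulVec (Pi.single j 1)) * v)
      - Real.log (1 + v / σ ^ 2)
      + lam * (Pi.single j 1 ⬝ᵥ (Syy⁻¹).mulVec (Pi.single j 1)) * v := by
  have hA : (Syy + S).PosDef := hYY.add_posSemidef hS
  have hB : (σ ^ 2 • (1 : Matrix (Fin m) (Fin m) ℝ) + S).PosDef :=
    (PosDef.one.smul (pow_pos hσ 2)).add_posSemidef hS
  have hBinv : (σ ^ 2 • (1 : Matrix (Fin m) (Fin m) ℝ) + S)⁻¹ j j = (σ ^ 2)⁻¹ :=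
    inv_apply_self_of_mulVec_single_one hB.det_pos.ne'.isUnit (by
      rw [add_mulVec, hSj, smul_mulVec, one_mulVec, add_zero])
  simp only [attackCost, smul_single, smul_eq_mul, mul_one, ← add_assoc,
    hA.log_det_add_single_same j hv.le, hB.log_det_add_single_same j hv.le, hBinv, mul_add,
    trace_add, trace_mul_single, op_smul_eq_mul, single_one_dotProduct_mulVec_single_one,
    inv_mul_eq_div]
  ring

/-- Rank-one cost-difference formula (eq. (32) in the proof of Theorem 1):
`J(Σ + v·e_j e_jᵀ) − J(Σ) = (1−λ)·log(1 + α_j v) − log(1 + v/σ²) + λ·β_j·v`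
where `α_j = e_jᵀ(Σ_YY + Σ)⁻¹e_j` and `β_j = e_jᵀ Σ_YY⁻¹ e_j`. -/
theorem rank_one_cost_difference
    (m : ℕ) (hm : 1 ≤ m) (σ lam : ℝ) (hσ : 0 < σ) (hlam : 1 ≤ lam)
    (Syy : Matrix (Fin m) (Fin m) ℝ) (hYY : Syy.PosDef)
    (S : Matrix (Fin m) (Fin m) ℝ) (hSsym : S.IsSymm) (hS : S.PosSemidef)
    (j : Fin m) (hSj : S.mulVec (Pi.single j 1) = 0)
    (v : ℝ) (hv : 0 < v) :
    attackCost m σ lam Syy (S + v • Matrix.single j j 1)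
      - attackCost m σ lam Syy S =
    (1 - lam) * Real.log (1 + (Pi.single j 1 ⬝ᵥ ((Syy + S)⁻¹).mulVec (Pi.single j 1)) * v)
      - Real.log (1 + v / σ ^ 2)
      + lam * (Pi.single j 1 ⬝ᵥ (Syy⁻¹).mulVec (Pi.single j 1)) * v :=
  rank_one_cost_difference_general m σ lam hσ Syy hYY S hS j hSj v hv
end

section
/- Fix a symmetric positive semidefinite matrix Σ ∈ ℝ^{m×m} and an index j. Let C_j := { Δ ∈ ℝ^{m×m} : Δ = s·e_jᵀ + e_j·sᵀ for some s ∈ ℝ^m, and Σ + Δ is positive semidefinite }. Then C_j is a convex set, and the map Δ ↦ J(Σ + Δ) is convex on C_j; i.e. the sensor-selection subproblem (36) for a fixed new index j is a convex optimization problem. (Theorem 2.) -/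
open Matrix Real

variable {n : ℕ}

lemma posSemidef_smul' {A : Matrix (Fin n) (Fin n) ℝ} (hA : A.PosSemidef) {c : ℝ} (hc : 0 ≤ c) :
    (c • A).PosSemidef := by
  refine posSemidef_iff_dotProduct_mulVec.mpr ⟨?_, fun x => ?_⟩
  · unfold Matrix.IsHermitian
    rw [conjTranspose_smul, hA.1.eq]
    simp
  · rw [smul_mulVec, dotProduct_smul, smul_eq_mul]
    exact mul_nonneg hc (hA.dotProduct_mulVec_nonneg x)

lemma posDef_conj' {A C : Matrix (Fin n) (Fin n) ℝ} (hA : A.PosDef) (hC : IsUnit C.det) :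
    (Cᴴ * A * C).PosDef := by
  refine posDef_iff_dotProduct_mulVec.mpr ⟨isHermitian_conjTranspose_mul_mul C hA.1, fun x hx => ?_⟩
  have hCx : C *ᵥ x ≠ 0 := fun h => hx (mulVec_injective_iff_isUnit.2 ((isUnit_iff_isUnit_det C).2 hC) (by simpa using h))
  simpa only [star_mulVec, dotProduct_mulVec, vecMul_vecMul] using hA.dotProduct_mulVec_pos hCx

open scoped MatrixOrder in
/-- Concavity of `log ∘ det` on positive definite matrices. -/
lemma logdet_concave {A B : Matrix (Fin n) (Fin n) ℝ} (hA : A.PosDef) (hB : B.PosDef)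
    {a b : ℝ} (ha : 0 ≤ a) (hb : 0 ≤ b) (hab : a + b = 1) :
    a * Real.log A.det + b * Real.log B.det ≤ Real.log (a • A + b • B).det := by
  classical
  set Q : Matrix (Fin n) (Fin n) ℝ := CFC.sqrt A with hQdef
  have hQQ : Q * Q = A := CFC.sqrt_mul_sqrt_self A hA.posSemidef.nonneg
  have hQH : Q.IsHermitian := (CFC.sqrt_nonneg A).posSemidef.1
  have hdetA : 0 < A.det := hA.det_pos
  have hdetQ : Q.det * Q.det = A.det := by rw [← det_mul, hQQ]
  have hdetQ0 : Q.det ≠ 0 := fun h => by simp [h] at hdetQ; exact hdetA.ne' hdetQ.symm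
  have hQunit : IsUnit Q.det := isUnit_iff_ne_zero.2 hdetQ0
  have hQinv : Q⁻¹.IsHermitian := hQH.inv
  have hQIunit : IsUnit Q⁻¹.det := Q.isUnit_nonsing_inv_det hQunit
  set M : Matrix (Fin n) (Fin n) ℝ := Q⁻¹ * B * Q⁻¹ with hMdef
  have hM : M.PosDef := by
    have := posDef_conj' hB hQIunit
    rwa [hQinv.eq] at this
  -- a•A + b•B = Q * (a•1 + b•M) * Q
  have key : a • A + b • B = Q * (a • (1 : Matrix (Fin n) (Fin n) ℝ) + b • M) * Q := by
    rw [Matrix.mul_add, Matrix.add_mul, Matrix.mul_smul, Matrix.mul_smul,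
      Matrix.smul_mul, Matrix.smul_mul, Matrix.mul_one, hQQ, hMdef]
    congr 1
    rw [← Matrix.mul_assoc, ← Matrix.mul_assoc, Matrix.mul_nonsing_inv _ hQunit, Matrix.one_mul,
      Matrix.mul_assoc, Matrix.nonsing_inv_mul _ hQunit, Matrix.mul_one]
  have hH := hM.1
  set lm := hH.eigenvalues with hlm
  have hlmpos : ∀ i, 0 < lm i := fun i => hM.eigenvalues_pos i
  have hdetM : M.det = ∏ i, lm i := by simpa using hH.det_eq_prod_eigenvalues
  have hdet1M : (a • (1 : Matrix (Fin n) (Fin n) ℝ) + b • M).det = ∏ i, (a + b * lm i) := by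
    set U : Matrix (Fin n) (Fin n) ℝ := (hH.eigenvectorUnitary : Matrix (Fin n) (Fin n) ℝ) with hU
    have hU1 : U * star U = 1 := (Matrix.mem_unitaryGroup_iff).mp hH.eigenvectorUnitary.2
    have hsplit : a • (1 : Matrix (Fin n) (Fin n) ℝ) + b • M
        = U * (a • 1 + b • diagonal (RCLike.ofReal ∘ lm)) * star U := by
      rw [Matrix.mul_add, Matrix.add_mul, Matrix.mul_smul, Matrix.mul_smul,
        Matrix.smul_mul, Matrix.smul_mul, Matrix.mul_one, hU1]
      congr 1
      conv_lhs => rw [hH.spectral_theorem, Unitary.conjStarAlgAut_apply]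
    rw [hsplit, Matrix.det_mul_right_comm, hU1, Matrix.one_mul]
    have : a • (1 : Matrix (Fin n) (Fin n) ℝ) + b • diagonal (RCLike.ofReal ∘ lm)
        = diagonal (fun i => a + b * lm i) := by
      ext i k
      rcases eq_or_ne i k with rfl | h
      · simp [Matrix.diagonal_apply, Matrix.one_apply, mul_comm]
      · simp [Matrix.diagonal_apply, Matrix.one_apply, h]
    rw [this, Matrix.det_diagonal]
  have hpos : ∀ i : Fin n, 0 < a + b * lm i := by
    intro i
    rcases ha.eq_or_lt with h | h
    · have hb1 : b = 1 := by linarith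
      simpa [← h, hb1] using hlmpos i
    · exact add_pos_of_pos_of_nonneg h (mul_nonneg hb (hlmpos i).le)
  have hdetcomb : (a • A + b • B).det = A.det * ∏ i, (a + b * lm i) := by
    rw [key, Matrix.det_mul_right_comm, ← hdet1M]
    rw [show Q * Q = A from hQQ]
    rw [Matrix.det_mul]
  have hprodpos : 0 < ∏ i, (a + b * lm i) := Finset.prod_pos fun i _ => hpos i
  have hlogprod : Real.log (∏ i, (a + b * lm i)) = ∑ i, Real.log (a + b * lm i) :=
    Real.log_prod fun i _ => (hpos i).ne'
  have hstep : ∀ i : Fin n, b * Real.log (lm i) ≤ Real.log (a + b * lm i) := by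
    intro i
    have := strictConcaveOn_log_Ioi.concaveOn.2 (Set.mem_Ioi.2 one_pos)
      (Set.mem_Ioi.2 (hlmpos i)) ha hb hab
    simpa using this
  have hsum : b * Real.log M.det ≤ ∑ i, Real.log (a + b * lm i) := by
    have : Real.log M.det = ∑ i, Real.log (lm i) := by
      rw [hdetM]
      exact Real.log_prod fun i _ => (hlmpos i).ne'
    rw [this, Finset.mul_sum]
    exact Finset.sum_le_sum fun i _ => hstep i
  have hdetB : 0 < B.det := hB.det_pos
  have hlogM : Real.log M.det = Real.log B.det - Real.log A.det := by
    have hQinvdet : Q⁻¹.det = (Q.det)⁻¹ := by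
      rw [Matrix.det_nonsing_inv, Ring.inverse_eq_inv']
    have hdM : M.det = B.det / A.det := by
      rw [hMdef, Matrix.det_mul, Matrix.det_mul, hQinvdet, ← hdetQ]
      field_simp
    rw [hdM, Real.log_div hdetB.ne' hdetA.ne']
  rw [hdetcomb, Real.log_mul hdetA.ne' hprodpos.ne', hlogprod]
  have : a * Real.log A.det + b * Real.log B.det
      = Real.log A.det + b * Real.log M.det := by
    rw [hlogM]; linear_combination Real.log A.det * hab
  rw [this]
  linarith [hsum]

/-- Theorem 2: for a fixed new index `j`, the feasible set
`C_j = { Δ = s·e_jᵀ + e_j·sᵀ : Σ + Δ ⪰ 0 }` is convex and `Δ ↦ J(Σ + Δ)` is convex on it,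
i.e. the sensor-selection subproblem (36) is a convex optimization problem. -/
theorem sensor_selection_subproblem_convex
    (m : ℕ) (hm : 1 ≤ m) (σ lam : ℝ) (hσ : 0 < σ) (hlam : 1 ≤ lam)
    (Syy : Matrix (Fin m) (Fin m) ℝ) (hYY : Syy.PosDef)
    (S : Matrix (Fin m) (Fin m) ℝ) (hSsym : S.IsSymm) (hS : S.PosSemidef)
    (j : Fin m) :
    Convex ℝ {D : Matrix (Fin m) (Fin m) ℝ |
        (∃ s : Fin m → ℝ,
          D = Matrix.vecMulVec s (Pi.single j 1) + Matrix.vecMulVec (Pi.single j 1) s) ∧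
        (S + D).PosSemidef} ∧
    ConvexOn ℝ {D : Matrix (Fin m) (Fin m) ℝ |
        (∃ s : Fin m → ℝ,
          D = Matrix.vecMulVec s (Pi.single j 1) + Matrix.vecMulVec (Pi.single j 1) s) ∧
        (S + D).PosSemidef}
      (fun D => attackCost m σ lam Syy (S + D)) := by
  set C := {D : Matrix (Fin m) (Fin m) ℝ |
      (∃ s : Fin m → ℝ,
        D = Matrix.vecMulVec s (Pi.single j 1) + Matrix.vecMulVec (Pi.single j 1) s) ∧
      (S + D).PosSemidef} with hC
  have hcomb : ∀ {x y : Matrix (Fin m) (Fin m) ℝ} {a b : ℝ}, a + b = 1 →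
      S + (a • x + b • y) = a • (S + x) + b • (S + y) := by
    intro x y a b hab
    rw [smul_add, smul_add, add_add_add_comm, ← add_smul, hab, one_smul]
  have hconv : Convex ℝ C := by
    intro x hx y hy a b ha hb hab
    obtain ⟨⟨sx, hsx⟩, hxpsd⟩ := hx
    obtain ⟨⟨sy, hsy⟩, hypsd⟩ := hy
    refine ⟨⟨a • sx + b • sy, ?_⟩, ?_⟩
    · rw [hsx, hsy]
      ext i k
      simp [Matrix.vecMulVec_apply]
      ring
    · rw [hcomb hab]
      exact (posSemidef_smul' hxpsd ha).add (posSemidef_smul' hypsd hb)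
  refine ⟨hconv, hconv, fun x hx y hy a b ha hb hab => ?_⟩
  obtain ⟨-, hxpsd⟩ := hx
  obtain ⟨-, hypsd⟩ := hy
  have hσI : ((σ ^ 2) • (1 : Matrix (Fin m) (Fin m) ℝ)).PosDef := by
    refine posDef_iff_dotProduct_mulVec.mpr ⟨?_, fun v hv => ?_⟩
    · unfold Matrix.IsHermitian
      rw [conjTranspose_smul, Matrix.conjTranspose_one]
      simp
    · rw [smul_mulVec, dotProduct_smul, Matrix.one_mulVec, smul_eq_mul]
      exact mul_pos (by positivity) (dotProduct_star_self_pos_iff.mpr hv)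
  -- log-det concavity for the two terms
  have hld : ∀ (P : Matrix (Fin m) (Fin m) ℝ), P.PosDef →
      a * Real.log (P + (S + x)).det + b * Real.log (P + (S + y)).det
        ≤ Real.log (P + (S + (a • x + b • y))).det := by
    intro P hP
    have hx' : (P + (S + x)).PosDef := hP.add_posSemidef hxpsd
    have hy' : (P + (S + y)).PosDef := hP.add_posSemidef hypsd
    have hkey : P + (S + (a • x + b • y)) = a • (P + (S + x)) + b • (P + (S + y)) := by
      ext i k
      simp only [Matrix.add_apply, Matrix.smul_apply, smul_eq_mul]
      linear_combination (-(P i k + S i k)) * hab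
    rw [hkey]
    exact logdet_concave hx' hy' ha hb hab
  have h1 := hld Syy hYY
  have h2 := hld (σ ^ 2 • (1 : Matrix (Fin m) (Fin m) ℝ)) hσI
  have h3 : (Syy⁻¹ * (S + (a • x + b • y))).trace
      = a * (Syy⁻¹ * (S + x)).trace + b * (Syy⁻¹ * (S + y)).trace := by
    simp only [Matrix.mul_add, Matrix.trace_add, Matrix.mul_smul, Matrix.trace_smul,
      smul_eq_mul]
    linear_combination (-(Syy⁻¹ * S).trace) * hab
  simp only [attackCost, smul_eq_mul]
  have h1' := mul_le_mul_of_nonpos_left h1 (by linarith : 1 - lam ≤ 0)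
  have heq : a * ((1 - lam) * Real.log (Syy + (S + x)).det
        - Real.log (σ ^ 2 • (1 : Matrix (Fin m) (Fin m) ℝ) + (S + x)).det
        + lam * (Syy⁻¹ * (S + x)).trace)
      + b * ((1 - lam) * Real.log (Syy + (S + y)).det
        - Real.log (σ ^ 2 • (1 : Matrix (Fin m) (Fin m) ℝ) + (S + y)).det
        + lam * (Syy⁻¹ * (S + y)).trace)
      = (1 - lam) * (a * Real.log (Syy + (S + x)).det + b * Real.log (Syy + (S + y)).det)
        - (a * Real.log (σ ^ 2 • (1 : Matrix (Fin m) (Fin m) ℝ) + (S + x)).det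
           + b * Real.log (σ ^ 2 • (1 : Matrix (Fin m) (Fin m) ℝ) + (S + y)).det)
        + lam * (a * (Syy⁻¹ * (S + x)).trace + b * (Syy⁻¹ * (S + y)).trace) := by
    ring
  rw [heq, ← h3]
  linarith [h1', h2]
end

section
/- The function v ↦ J(Σ + v·e_j e_jᵀ), for v ≥ 0, is convex, where Σ is a symmetric positive semidefinite m×m matrix with Σ·e_j = 0 and j is a fixed index. (Convexity of the single-sensor update problem (24)/(31) in the independent attack construction.) -/
/-!
Adding `v` to the `j`-th diagonal entry changes a determinant affinely in `v`, by cofactor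
expansion along row `j`: `det (A + v Eⱼⱼ) = det A + v · adj(A)ⱼⱼ`, and `adj(A)ⱼⱼ > 0` when `A`
is positive definite. Hence both log-determinants in `J(Σ + v Eⱼⱼ)` are logarithms of
affine functions with positive slope, so concave in `v`, and enter `J` with the nonpositive
coefficients `1 - λ` and `-1`; the trace term is affine in `v`.
-/

open Matrix Real

theorem Matrix.det_add_smul_single_same {n R : Type*} [Fintype n] [DecidableEq n] [CommRing R]
    (A : Matrix n n R) (j : n) (v : R) :
    (A + v • single j j 1).det = A.det + v * A.adjugate j j := by
  have hrow : A + v • single j j 1 = A.updateRow j (A j + v • Pi.single j 1) := by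
    ext i k
    by_cases hij : i = j
    · subst hij
      simp [single, Pi.single_apply, eq_comm]
    · simp [single, hij, Ne.symm hij]
  rw [hrow, det_updateRow_add, det_updateRow_smul, updateRow_eq_self, adjugate_apply]

theorem Matrix.PosDef.adjugate_diag_pos {n : Type*} [Fintype n] [DecidableEq n]
    {A : Matrix n n ℝ} (hA : A.PosDef) (j : n) : 0 < A.adjugate j j := by
  have hinv : 0 < A⁻¹ j j := hA.inv.diag_pos
  rw [inv_def, smul_apply, Ring.inverse_eq_inv, smul_eq_mul] at hinv
  exact pos_of_mul_pos_right hinv (inv_pos.mpr hA.det_pos).le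

theorem concaveOn_log_add_mul {c a : ℝ} (hc : 0 < c) (ha : 0 ≤ a) :
    ConcaveOn ℝ (Set.Ici 0) (fun v : ℝ => log (c + v * a)) := by
  have hline : ⇑(AffineMap.lineMap c (c + a)) = fun v : ℝ => c + v * a := by
    ext v
    simp only [AffineMap.lineMap_apply_ring', add_sub_cancel_left]
    ring
  have h := strictConcaveOn_log_Ioi.concaveOn.comp_affineMap (AffineMap.lineMap c (c + a))
  rw [hline] at h
  exact h.subset (fun v (hv : 0 ≤ v) => show 0 < c + v * a by positivity) (convex_Ici 0)

theorem Matrix.PosDef.concaveOn_log_det_add_smul_single {n : Type*} [Fintype n]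
    [DecidableEq n] {A : Matrix n n ℝ} (hA : A.PosDef) (j : n) :
    ConcaveOn ℝ (Set.Ici 0) (fun v : ℝ => log (A + v • single j j 1).det) := by
  simpa only [det_add_smul_single_same, add_comm]
    using concaveOn_log_add_mul hA.det_pos (hA.adjugate_diag_pos j).le

theorem convexOn_trace_mul_add_smul {n : Type*} [Fintype n] {s : Set ℝ} (hs : Convex ℝ s)
    (M N E : Matrix n n ℝ) : ConvexOn ℝ s (fun v : ℝ => (M * (N + v • E)).trace) := by
  have h := (LinearMap.convexOn (LinearMap.id.smulRight (M * E).trace) hs).add_const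
    (M * N).trace
  refine h.congr fun v _ => ?_
  simp [Matrix.mul_add, trace_add, add_comm]

theorem single_sensor_update_convexOn_general
    (m : ℕ) (σ lam : ℝ) (hσ : 0 < σ) (hlam : 1 ≤ lam)
    (Syy : Matrix (Fin m) (Fin m) ℝ) (hYY : Syy.PosDef)
    (S : Matrix (Fin m) (Fin m) ℝ) (hS : S.PosSemidef)
    (j : Fin m) :
    ConvexOn ℝ (Set.Ici (0 : ℝ))
      (fun v : ℝ => attackCost m σ lam Syy (S + v • Matrix.single j j 1)) := by
  have hA : (Syy + S).PosDef := hYY.add_posSemidef hS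
  have hB : (σ ^ 2 • (1 : Matrix (Fin m) (Fin m) ℝ) + S).PosDef :=
    (PosDef.one.smul (pow_pos hσ 2)).add_posSemidef hS
  have hlogA := ((hA.concaveOn_log_det_add_smul_single j).neg).smul
    (show (0 : ℝ) ≤ lam - 1 by linarith)
  have hlogB := (hB.concaveOn_log_det_add_smul_single j).neg
  have htr := (convexOn_trace_mul_add_smul (convex_Ici 0) Syy⁻¹ S (single j j 1)).smul
    (show (0 : ℝ) ≤ lam by linarith)
  refine ((hlogA.add hlogB).add htr).congr fun v _ => ?_
  simp only [attackCost, Pi.add_apply, Pi.neg_apply, smul_eq_mul, add_assoc]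
  ring

/-- Convexity of the single-sensor update problem (24)/(31) in the independent attack
construction: `v ↦ J(Σ + v·e_j e_jᵀ)` is convex on `[0, ∞)`. -/
theorem single_sensor_update_convexOn
    (m : ℕ) (hm : 1 ≤ m) (σ lam : ℝ) (hσ : 0 < σ) (hlam : 1 ≤ lam)
    (Syy : Matrix (Fin m) (Fin m) ℝ) (hYY : Syy.PosDef)
    (S : Matrix (Fin m) (Fin m) ℝ) (hSsym : S.IsSymm) (hS : S.PosSemidef)
    (j : Fin m) (hSj : S.mulVec (Pi.single j 1) = 0) :
    ConvexOn ℝ (Set.Ici (0 : ℝ))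
      (fun v : ℝ => attackCost m σ lam Syy (S + v • Matrix.single j j 1)) :=
  single_sensor_update_convexOn_general m σ lam hσ hlam Syy hYY S hS j
end
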